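/- arXiv:1311.7575 — 2 statements merged into one kernel-verified Lean document; each statement's English description precedes it below -/
import Mathlib

section
/- Let X, Y, Z be pointed metric spaces and 0 < p ≤ s ≤ t ≤ ∞. If S : Y → Z is a Lipschitz (m^L(t;s),s)-summing map and T : X → Y is a Lipschitz (m^L(s;p),p)-summing map, then S ∘ T : X → Z is a Lipschitz (m^L(t;p),p)-summing map and π^L_{(m^L(t;p),p)}(S ∘ T) ≤ π^L_{(m^L(t;s),s)}(S) · π^L_{(m^L(s;p),p)}(T). -/
open MeasureTheory ENNReal NNReal

noncomputable section

/-- The closed unit ball `B_{X^#}` of the Lipschitz dual of a pointed metric space `(X, x₀)`: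
all Lipschitz functions `f : X → ℝ` with `f x₀ = 0` and Lipschitz constant at most `1`. -/
def dualBall (X : Type*) [MetricSpace X] (x₀ : X) : Set (X → ℝ) :=
  {f | LipschitzWith 1 f ∧ f x₀ = 0}

/-- The strong `ℓ_p` norm `‖(σ,x',x'')|ℓ_p‖ = (Σ_j |σ_j|^p d(x'_j,x''_j)^p)^{1/p}`
(with the sup for `p = ∞`). -/
def strongNorm {X : Type*} [MetricSpace X] (p : ℝ≥0∞) {m : ℕ}
    (σ : Fin m → ℝ) (x' x'' : Fin m → X) : ℝ≥0∞ :=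
  eLpNorm (fun j => σ j * dist (x' j) (x'' j)) p Measure.count

/-- The weak Lipschitz `ℓ_p` norm
`‖(σ,x',x'')|ℓ_p^{L,w}‖ = sup_{f ∈ B_{X^#}} (Σ_j |σ_j|^p |f(x'_j) - f(x''_j)|^p)^{1/p}`. -/
def weakNorm {X : Type*} [MetricSpace X] (x₀ : X) (p : ℝ≥0∞) {m : ℕ}
    (σ : Fin m → ℝ) (x' x'' : Fin m → X) : ℝ≥0∞ :=
  ⨆ f ∈ dualBall X x₀, eLpNorm (fun j => σ j * (f (x' j) - f (x'' j))) p Measure.count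

/-- The `q`-conjugate index `s'(q)`, determined by `1/s'(q) = 1/q - 1/s`. -/
def conjIdx (q s : ℝ≥0∞) : ℝ≥0∞ := (1 / q - 1 / s)⁻¹

/-- The Lipschitz mixed `(s;q)`-norm
`m^L_{(s;q)}(σ,x',x'') = inf ‖τ|ℓ_{s'(q)}‖ ⬝ ‖(σ/τ,x',x'')|ℓ_s^{L,w}‖`,
the infimum over all finite sequences `τ` of nonzero reals. -/
def mixedNorm {X : Type*} [MetricSpace X] (x₀ : X) (s q : ℝ≥0∞) {m : ℕ}
    (σ : Fin m → ℝ) (x' x'' : Fin m → X) : ℝ≥0∞ :=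
  ⨅ (τ : Fin m → ℝ) (_ : ∀ j, τ j ≠ 0),
    eLpNorm τ (conjIdx q s) Measure.count * weakNorm x₀ s (fun j => σ j / τ j) x' x''

/-- `T` is Lipschitz `(m^L(s;q),p)`-summing:
`m^L_{(s;q)}(σ,Tx',Tx'') ≤ C ⬝ ‖(σ,x',x'')|ℓ_p^{L,w}‖` for all finite sequences. -/
def LipMixedP {X Y : Type*} [MetricSpace X] [MetricSpace Y] (x₀ : X) (y₀ : Y)
    (s q p : ℝ≥0∞) (T : X → Y) : Prop :=
  ∃ C : ℝ≥0, ∀ (m : ℕ) (σ : Fin m → ℝ) (x' x'' : Fin m → X),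
    mixedNorm y₀ s q σ (T ∘ x') (T ∘ x'') ≤ C * weakNorm x₀ p σ x' x''

/-- The norm `π^L_{(m^L(s;q),p)}(T)`, the least constant in the defining inequality. -/
def lipMixedPNorm {X Y : Type*} [MetricSpace X] [MetricSpace Y] (x₀ : X) (y₀ : Y)
    (s q p : ℝ≥0∞) (T : X → Y) : ℝ≥0∞ :=
  sInf {C : ℝ≥0∞ | ∀ (m : ℕ) (σ : Fin m → ℝ) (x' x'' : Fin m → X),
    mixedNorm y₀ s q σ (T ∘ x') (T ∘ x'') ≤ C * weakNorm x₀ p σ x' x''}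

/-- `T` is Lipschitz `(p,m^L(s;q))`-summing:
`‖(σ,Tx',Tx'')|ℓ_p‖ ≤ C ⬝ m^L_{(s;q)}(σ,x',x'')` for all finite sequences. -/
def LipPMixed {X Y : Type*} [MetricSpace X] [MetricSpace Y] (x₀ : X)
    (p s q : ℝ≥0∞) (T : X → Y) : Prop :=
  ∃ C : ℝ≥0, ∀ (m : ℕ) (σ : Fin m → ℝ) (x' x'' : Fin m → X),
    strongNorm p σ (T ∘ x') (T ∘ x'') ≤ C * mixedNorm x₀ s q σ x' x''

/-- The norm `π^L_{(p,m^L(s;q))}(T)`, the least constant in the defining inequality. -/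
def lipPMixedNorm {X Y : Type*} [MetricSpace X] [MetricSpace Y] (x₀ : X)
    (p s q : ℝ≥0∞) (T : X → Y) : ℝ≥0∞ :=
  sInf {C : ℝ≥0∞ | ∀ (m : ℕ) (σ : Fin m → ℝ) (x' x'' : Fin m → X),
    strongNorm p σ (T ∘ x') (T ∘ x'') ≤ C * mixedNorm x₀ s q σ x' x''}

/-- The Lipschitz constant of a map, as an element of `ℝ≥0∞` (equal to `∞` if the map is
not Lipschitz). -/
def lipConst {α β : Type*} [PseudoEMetricSpace α] [PseudoEMetricSpace β] (f : α → β) : ℝ≥0∞ :=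
  ⨅ (K : ℝ≥0) (_ : LipschitzWith K f), (K : ℝ≥0∞)


/-! If `τ₁` is admissible in `m^L_{(s;p)}(σ,Tx',Tx'')` and `τ₂` in
`m^L_{(t;s)}(σ/τ₁,STx',STx'')`, then `τ₁τ₂` is admissible in `m^L_{(t;p)}(σ,STx',STx'')`, and
Hölder's inequality with `1/t'(p) = 1/s'(p) + 1/t'(s)` gives `‖τ₁τ₂‖ ≤ ‖τ₁‖‖τ₂‖`. Taking infima,
`m^L_{(t;p)}(σ,STx',STx'') ≤ π(S) · m^L_{(s;p)}(σ,Tx',Tx'') ≤ π(S) π(T) ‖(σ,x',x'')|ℓ_p^{L,w}‖`. -/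

def IsLipMixedPBound {X Y : Type*} [MetricSpace X] [MetricSpace Y] (x₀ : X) (y₀ : Y)
    (s q p : ℝ≥0∞) (T : X → Y) (C : ℝ≥0∞) : Prop :=
  ∀ (m : ℕ) (σ : Fin m → ℝ) (x' x'' : Fin m → X),
    mixedNorm y₀ s q σ (T ∘ x') (T ∘ x'') ≤ C * weakNorm x₀ p σ x' x''

lemma ENNReal.sInf_le_sInf_mul_sInf {A B C : Set ℝ≥0∞} (hA : ∃ a ∈ A, a ≠ ∞)
    (hB : ∃ b ∈ B, b ≠ ∞) (hmul : ∀ a ∈ A, a ≠ ∞ → ∀ b ∈ B, a * b ∈ C) :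
    sInf C ≤ sInf A * sInf B := by
  obtain ⟨a, ha, ha_ne⟩ := hA
  obtain ⟨b, hb, hb_ne⟩ := hB
  rw [sInf_eq_iInf' A, sInf_eq_iInf' B, ← iInf_ne_top_subtype]
  exact ENNReal.le_iInf_mul_iInf ⟨⟨⟨a, ha⟩, ha_ne⟩, ha_ne⟩ ⟨⟨b, hb⟩, hb_ne⟩
    fun a b => sInf_le (hmul _ a.1.2 a.2 _ b.2)

lemma holderTriple_conjIdx {p s t : ℝ≥0∞} (hps : p ≤ s) (hst : s ≤ t) :
    HolderTriple (conjIdx p s) (conjIdx s t) (conjIdx p t) := by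
  rw [ENNReal.holderTriple_iff]
  simp only [conjIdx, one_div, inv_inv]
  exact tsub_add_tsub_cancel (ENNReal.inv_le_inv.2 hps) (ENNReal.inv_le_inv.2 hst)

lemma mul_mixedNorm {X : Type*} [MetricSpace X] (x₀ : X) (s q : ℝ≥0∞) {m : ℕ}
    (σ : Fin m → ℝ) (x' x'' : Fin m → X) {a : ℝ≥0∞} (ha : a ≠ ∞) :
    a * mixedNorm x₀ s q σ x' x'' = ⨅ (τ : Fin m → ℝ) (_ : ∀ j, τ j ≠ 0),
      a * (eLpNorm τ (conjIdx q s) Measure.count * weakNorm x₀ s (fun j => σ j / τ j) x' x'') := by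
  have : Nonempty {τ : Fin m → ℝ // ∀ j, τ j ≠ 0} := ⟨⟨1, fun _ => one_ne_zero⟩⟩
  rw [mixedNorm, iInf_subtype', iInf_subtype', ENNReal.mul_iInf fun h => (ha h).elim]

lemma mixedNorm_le_mul_mixedNorm_div {Z : Type*} [MetricSpace Z] (z₀ : Z) {p s t : ℝ≥0∞}
    (hps : p ≤ s) (hst : s ≤ t) {m : ℕ} (σ τ₁ : Fin m → ℝ) (hτ₁ : ∀ j, τ₁ j ≠ 0)
    (z' z'' : Fin m → Z) :
    mixedNorm z₀ t p σ z' z'' ≤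
      eLpNorm τ₁ (conjIdx p s) Measure.count *
        mixedNorm z₀ t s (fun j => σ j / τ₁ j) z' z'' := by
  have := holderTriple_conjIdx hps hst
  rw [mul_mixedNorm _ _ _ _ _ _ eLpNorm_lt_top_of_finite.ne]
  refine le_iInf₂ fun τ₂ hτ₂ => ?_
  have holder : eLpNorm (τ₁ * τ₂) (conjIdx p t) Measure.count ≤
      eLpNorm τ₁ (conjIdx p s) Measure.count * eLpNorm τ₂ (conjIdx s t) Measure.count :=
    eLpNorm_smul_le_mul_eLpNorm (f := τ₂) (φ := τ₁)
      (measurable_of_countable _).aestronglyMeasurable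
      (measurable_of_countable _).aestronglyMeasurable
  calc mixedNorm z₀ t p σ z' z''
      ≤ eLpNorm (τ₁ * τ₂) (conjIdx p t) Measure.count *
          weakNorm z₀ t (fun j => σ j / (τ₁ j * τ₂ j)) z' z'' :=
        iInf₂_le (τ₁ * τ₂) fun j => mul_ne_zero (hτ₁ j) (hτ₂ j)
    _ ≤ eLpNorm τ₁ (conjIdx p s) Measure.count * (eLpNorm τ₂ (conjIdx s t) Measure.count *
          weakNorm z₀ t (fun j => σ j / τ₁ j / τ₂ j) z' z'') := by
        simp only [div_div, ← mul_assoc]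
        gcongr

lemma mixedNorm_comp_le_mul_mixedNorm {Y Z : Type*} [MetricSpace Y] [MetricSpace Z]
    (y₀ : Y) (z₀ : Z) {p s t : ℝ≥0∞} (hps : p ≤ s) (hst : s ≤ t) {S : Y → Z} {C : ℝ≥0∞}
    (hS : IsLipMixedPBound y₀ z₀ t s s S C) (hC : C ≠ ∞)
    {m : ℕ} (σ : Fin m → ℝ) (y' y'' : Fin m → Y) :
    mixedNorm z₀ t p σ (S ∘ y') (S ∘ y'') ≤ C * mixedNorm y₀ s p σ y' y'' := by
  rw [mul_mixedNorm _ _ _ _ _ _ hC]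
  refine le_iInf₂ fun τ hτ => ?_
  calc mixedNorm z₀ t p σ (S ∘ y') (S ∘ y'')
      ≤ eLpNorm τ (conjIdx p s) Measure.count *
          mixedNorm z₀ t s (fun j => σ j / τ j) (S ∘ y') (S ∘ y'') :=
        mixedNorm_le_mul_mixedNorm_div z₀ hps hst σ τ hτ _ _
    _ ≤ eLpNorm τ (conjIdx p s) Measure.count *
          (C * weakNorm y₀ s (fun j => σ j / τ j) y' y'') := by
        gcongr
        exact hS m _ y' y''
    _ = C * (eLpNorm τ (conjIdx p s) Measure.count *
          weakNorm y₀ s (fun j => σ j / τ j) y' y'') := mul_left_comm _ _ _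

lemma IsLipMixedPBound.comp {X Y Z : Type*} [MetricSpace X] [MetricSpace Y] [MetricSpace Z]
    {x₀ : X} {y₀ : Y} {z₀ : Z} {p s t : ℝ≥0∞} (hps : p ≤ s) (hst : s ≤ t)
    {S : Y → Z} {T : X → Y} {C₁ C₂ : ℝ≥0∞}
    (hS : IsLipMixedPBound y₀ z₀ t s s S C₁) (hC₁ : C₁ ≠ ∞)
    (hT : IsLipMixedPBound x₀ y₀ s p p T C₂) :
    IsLipMixedPBound x₀ z₀ t p p (S ∘ T) (C₁ * C₂) := fun m σ x' x'' =>
  calc mixedNorm z₀ t p σ (S ∘ T ∘ x') (S ∘ T ∘ x'')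
      ≤ C₁ * mixedNorm y₀ s p σ (T ∘ x') (T ∘ x'') :=
        mixedNorm_comp_le_mul_mixedNorm y₀ z₀ hps hst hS hC₁ σ _ _
    _ ≤ C₁ * C₂ * weakNorm x₀ p σ x' x'' := by
        rw [mul_assoc]
        gcongr
        exact hT m σ x' x''

theorem stmt4_general {X Y Z : Type*} [MetricSpace X] [MetricSpace Y] [MetricSpace Z]
    (x₀ : X) (y₀ : Y) (z₀ : Z) (p s t : ℝ≥0∞)
    (hps : p ≤ s) (hst : s ≤ t)
    (S : Y → Z) (T : X → Y)
    (hSsum : LipMixedP y₀ z₀ t s s S) (hTsum : LipMixedP x₀ y₀ s p p T) :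
    LipMixedP x₀ z₀ t p p (S ∘ T) ∧
    lipMixedPNorm x₀ z₀ t p p (S ∘ T) ≤
      lipMixedPNorm y₀ z₀ t s s S * lipMixedPNorm x₀ y₀ s p p T := by
  obtain ⟨CS, hCS⟩ := hSsum
  obtain ⟨CT, hCT⟩ := hTsum
  refine ⟨⟨CS * CT, ?_⟩, ?_⟩
  · have hST := IsLipMixedPBound.comp hps hst (C₁ := CS) (C₂ := CT) hCS coe_ne_top hCT
    rwa [← ENNReal.coe_mul] at hST
  · exact ENNReal.sInf_le_sInf_mul_sInf ⟨CS, hCS, coe_ne_top⟩ ⟨CT, hCT, coe_ne_top⟩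
      fun _ hC₁ hC₁_ne _ hC₂ => IsLipMixedPBound.comp hps hst hC₁ hC₁_ne hC₂

/-- if `0 < p ≤ s ≤ t ≤ ∞`, `S : Y → Z` is Lipschitz `(m^L(t;s),s)`-summing
and `T : X → Y` is Lipschitz `(m^L(s;p),p)`-summing, then `S ∘ T` is Lipschitz
`(m^L(t;p),p)`-summing with
`π^L_{(m^L(t;p),p)}(S ∘ T) ≤ π^L_{(m^L(t;s),s)}(S) ⬝ π^L_{(m^L(s;p),p)}(T)`. -/
theorem stmt4 {X Y Z : Type*} [MetricSpace X] [MetricSpace Y] [MetricSpace Z]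
    (x₀ : X) (y₀ : Y) (z₀ : Z) (p s t : ℝ≥0∞)
    (hp : 0 < p) (hps : p ≤ s) (hst : s ≤ t)
    (S : Y → Z) (T : X → Y) (KS KT : ℝ≥0)
    (hS : LipschitzWith KS S) (hT : LipschitzWith KT T)
    (hSsum : LipMixedP y₀ z₀ t s s S) (hTsum : LipMixedP x₀ y₀ s p p T) :
    LipMixedP x₀ z₀ t p p (S ∘ T) ∧
    lipMixedPNorm x₀ z₀ t p p (S ∘ T) ≤
      lipMixedPNorm y₀ z₀ t s s S * lipMixedPNorm x₀ y₀ s p p T :=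
  stmt4_general x₀ y₀ z₀ p s t hps hst S T hSsum hTsum
end
end

section
/- Let X and Y be pointed metric spaces and 0 < p ≤ s ≤ ∞. Every Lipschitz (p,m^L(s;p))-summing map T : X → Y is Lipschitz (s,m^L(s;s))-summing, and π^L_{(s,m^L(s;s))}(T) ≤ π^L_{(p,m^L(s;p))}(T). -/
open MeasureTheory ENNReal NNReal

noncomputable section

/-!
Because `m^L_{(s;s)}` dominates the weak `ℓ_s`-norm (bound `τ` by its sup norm), it suffices
to show `‖(σ,Tx',Tx'')|ℓ_s‖ ≤ C ‖(σ,x',x'')|ℓ_s^{L,w}‖`. For `s = ∞` apply the hypothesis to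
each single term. For `p < s < ∞` write `a_j = |σ_j| d(Tx'_j,Tx''_j)`, drop the indices with
`a_j = 0` (the weights in the mixed norm must be nonzero) and apply the hypothesis to `σ_j τ_j`
with the extremal Hölder weights `τ_j = a_j^t`, `t = s/p - 1 = s/s'(p)`. With
`A = ‖(σ,Tx',Tx'')|ℓ_s‖` this gives `‖(στ,Tx',Tx'')|ℓ_p‖ = A^{t+1}` and `‖τ|ℓ_{s'(p)}‖ = A^t`,
so `A^{t+1} ≤ C A^t ‖(σ,x',x'')|ℓ_s^{L,w}‖`, and one divides by `A^t`.
-/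

section CountingMeasure

variable {α β E : Type*} [MeasurableSpace α] [DiscreteMeasurableSpace α]
  [MeasurableSpace β] [DiscreteMeasurableSpace β] [NormedAddCommGroup E]

theorem Function.Injective.map_count_eq_restrict_range {e : α → β} (he : e.Injective) :
    Measure.count.map e = Measure.count.restrict (Set.range e) := by
  ext S hS
  rw [Measure.map_apply .of_discrete hS, Measure.restrict_apply hS,
    Measure.count_apply .of_discrete, Measure.count_apply .of_discrete, ← he.encard_image,
    Set.image_preimage_eq_inter_range]

theorem eLpNorm_comp_count_eq [Countable β] {e : α → β} (he : e.Injective) (g : β → E)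
    (q : ℝ≥0∞) :
    eLpNorm (g ∘ e) q Measure.count = eLpNorm g q (Measure.count.restrict (Set.range e)) := by
  rw [← he.map_count_eq_restrict_range, eLpNorm_map_measure .of_discrete .of_discrete]

theorem eLpNorm_comp_count_le [Countable β] {e : α → β} (he : e.Injective) (g : β → E)
    (q : ℝ≥0∞) :
    eLpNorm (g ∘ e) q Measure.count ≤ eLpNorm g q Measure.count :=
  (eLpNorm_comp_count_eq he g q).trans_le (eLpNorm_restrict_le _ _ _ _)

theorem eLpNorm_comp_count_eq_of_support_subset [Countable β] {e : α → β} (he : e.Injective)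
    {g : β → E} (hg : g.support ⊆ Set.range e) (q : ℝ≥0∞) :
    eLpNorm (g ∘ e) q Measure.count = eLpNorm g q Measure.count := by
  rw [eLpNorm_comp_count_eq he, eLpNorm_restrict_eq_of_support_subset hg]

end CountingMeasure

theorem conjIdx_ne_top {p s : ℝ≥0∞} (hps : p < s) : conjIdx p s ≠ ∞ := by
  simpa [conjIdx, tsub_eq_zero_iff_le] using ENNReal.inv_lt_inv.2 hps

theorem conjIdx_toReal {p s : ℝ≥0∞} (hp : p ≠ 0) (hps : p < s) :
    (conjIdx p s).toReal = (p.toReal⁻¹ - s.toReal⁻¹)⁻¹ := by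
  rw [conjIdx, ENNReal.toReal_inv,
    ENNReal.toReal_sub_of_le (by simpa using (ENNReal.inv_lt_inv.2 hps).le) (by simpa using hp)]
  simp [ENNReal.toReal_inv]

theorem exists_exponent_conjIdx {p s : ℝ≥0∞} (hp : p ≠ 0) (hps : p < s) (hs : s ≠ ∞) :
    ∃ t : ℝ, 0 < t ∧ p * ENNReal.ofReal (t + 1) = s ∧ conjIdx p s * ENNReal.ofReal t = s := by
  have hpt : p ≠ ∞ := (hps.trans_le le_top).ne
  have hp' : 0 < p.toReal := ENNReal.toReal_pos hp hpt
  have hps' : p.toReal < s.toReal := (ENNReal.toReal_lt_toReal hpt hs).2 hps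
  have hd : 0 < p.toReal⁻¹ - s.toReal⁻¹ := sub_pos.2 (inv_strictAnti₀ hp' hps')
  refine ⟨s.toReal / p.toReal - 1, by rwa [sub_pos, one_lt_div hp'], ?_, ?_⟩
  · nth_rw 1 [sub_add_cancel, ← ENNReal.ofReal_toReal hpt]
    rw [← ENNReal.ofReal_mul hp'.le, mul_div_cancel₀ _ hp'.ne', ENNReal.ofReal_toReal hs]
  · have hs' : 0 < s.toReal := hp'.trans hps'
    have : (p.toReal⁻¹ - s.toReal⁻¹)⁻¹ * (s.toReal / p.toReal - 1) = s.toReal := by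
      field_simp
      exact div_self (sub_pos.2 hps').ne'
    rw [← ENNReal.ofReal_toReal (conjIdx_ne_top hps), conjIdx_toReal hp hps,
      ← ENNReal.ofReal_mul (inv_pos.2 hd).le, this, ENNReal.ofReal_toReal hs]

theorem conjIdx_self (s : ℝ≥0∞) : conjIdx s s = ∞ := by
  simp [conjIdx]

theorem conjIdx_top (p : ℝ≥0∞) : conjIdx p ∞ = p := by
  simp [conjIdx]

section LipschitzNorms

variable {X : Type*} [MetricSpace X] (x₀ : X) {m : ℕ}

theorem weakNorm_comp_le (q : ℝ≥0∞) {k : ℕ} {e : Fin k → Fin m} (he : e.Injective)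
    (σ : Fin m → ℝ) (x' x'' : Fin m → X) :
    weakNorm x₀ q (σ ∘ e) (x' ∘ e) (x'' ∘ e) ≤ weakNorm x₀ q σ x' x'' :=
  iSup₂_mono fun f _ => eLpNorm_comp_count_le he (fun j => σ j * (f (x' j) - f (x'' j))) q

theorem mixedNorm_mul_le (s q : ℝ≥0∞) (σ : Fin m → ℝ) {τ : Fin m → ℝ} (hτ : ∀ j, τ j ≠ 0)
    (x' x'' : Fin m → X) :
    mixedNorm x₀ s q (fun j => σ j * τ j) x' x''
      ≤ eLpNorm τ (conjIdx q s) Measure.count * weakNorm x₀ s σ x' x'' := by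
  refine (iInf₂_le τ hτ).trans_eq ?_
  simp only [mul_div_cancel_right₀ _ (hτ _)]

theorem weakNorm_le_mixedNorm_self (s : ℝ≥0∞) (σ : Fin m → ℝ) (x' x'' : Fin m → X) :
    weakNorm x₀ s σ x' x'' ≤ mixedNorm x₀ s s σ x' x'' := by
  refine le_iInf₂ fun τ hτ => iSup₂_le fun f hf => ?_
  have hσ : (fun j => σ j * (f (x' j) - f (x'' j)))
      = τ • fun j => σ j / τ j * (f (x' j) - f (x'' j)) := by
    funext j
    simp [mul_div_cancel₀ _ (hτ j), ← mul_assoc]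
  rw [hσ, conjIdx_self]
  exact (eLpNorm_smul_le_eLpNorm_top_mul_eLpNorm _ .of_discrete τ).trans
    (mul_le_mul_right (le_iSup₂ (f := fun f (_ : f ∈ dualBall X x₀) =>
      eLpNorm (fun j => σ j / τ j * (f (x' j) - f (x'' j))) s Measure.count) f hf) _)

end LipschitzNorms

section Summing

variable {X Y : Type*} [MetricSpace X] [MetricSpace Y] (x₀ : X) (T : X → Y) {p s C : ℝ≥0∞}

theorem strongNorm_le_mul_weakNorm_of_forall_ne_zero
    (h : ∀ (m : ℕ) (σ : Fin m → ℝ) (x' x'' : Fin m → X),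
      (∀ j, σ j * dist (T (x' j)) (T (x'' j)) ≠ 0) →
        strongNorm s σ (T ∘ x') (T ∘ x'') ≤ C * weakNorm x₀ s σ x' x'')
    {m : ℕ} (σ : Fin m → ℝ) (x' x'' : Fin m → X) :
    strongNorm s σ (T ∘ x') (T ∘ x'') ≤ C * weakNorm x₀ s σ x' x'' := by
  classical
  set J := Finset.univ.filter fun j => σ j * dist (T (x' j)) (T (x'' j)) ≠ 0
  set e := J.orderEmbOfFin rfl
  have hrange : Set.range e = J := Finset.range_orderEmbOfFin J rfl
  have hsupp : (fun j => σ j * dist (T (x' j)) (T (x'' j))).support ⊆ Set.range e := by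
    intro j hj
    simpa [hrange, J] using hj
  calc strongNorm s σ (T ∘ x') (T ∘ x'')
      = strongNorm s (σ ∘ e) (T ∘ x' ∘ e) (T ∘ x'' ∘ e) :=
        (eLpNorm_comp_count_eq_of_support_subset e.injective hsupp s).symm
    _ ≤ C * weakNorm x₀ s (σ ∘ e) (x' ∘ e) (x'' ∘ e) :=
        h _ _ _ _ fun i => (Finset.mem_filter.1 (hrange ▸ Set.mem_range_self i :)).2
    _ ≤ C * weakNorm x₀ s σ x' x'' := by
        gcongr
        exact weakNorm_comp_le x₀ s e.injective σ x' x''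

theorem strongNorm_top_le_mul_weakNorm (hp : p ≠ 0)
    (h : ∀ (m : ℕ) (σ : Fin m → ℝ) (x' x'' : Fin m → X),
      strongNorm p σ (T ∘ x') (T ∘ x'') ≤ C * mixedNorm x₀ ∞ p σ x' x'')
    {m : ℕ} (σ : Fin m → ℝ) (x' x'' : Fin m → X) :
    strongNorm ∞ σ (T ∘ x') (T ∘ x'') ≤ C * weakNorm x₀ ∞ σ x' x'' := by
  rw [strongNorm, eLpNorm_exponent_top, eLpNormEssSup_count]
  refine iSup_le fun j => ?_
  set e : Fin 1 → Fin m := fun _ => j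
  have he : e.Injective := fun _ _ _ => Subsingleton.elim _ _
  calc ‖σ j * dist (T (x' j)) (T (x'' j))‖ₑ
      = strongNorm p (σ ∘ e) (T ∘ x' ∘ e) (T ∘ x'' ∘ e) := by
        rw [strongNorm, Unique.count_eq_dirac, eLpNorm_dirac _ _ hp]
        rfl
    _ ≤ C * mixedNorm x₀ ∞ p (fun i => (σ ∘ e) i * 1) (x' ∘ e) (x'' ∘ e) := by
        simp only [mul_one]
        exact h 1 (σ ∘ e) (x' ∘ e) (x'' ∘ e)
    _ ≤ C * weakNorm x₀ ∞ σ x' x'' := by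
        gcongr
        refine (mixedNorm_mul_le x₀ ∞ p _ (fun _ => one_ne_zero) _ _).trans ?_
        rw [conjIdx_top, Unique.count_eq_dirac, eLpNorm_dirac _ _ hp, enorm_one, one_mul]
        exact weakNorm_comp_le x₀ ∞ he σ x' x''

theorem strongNorm_le_mul_weakNorm_of_lt_of_ne_zero (hp : p ≠ 0) (hps : p < s) (hs : s ≠ ∞)
    (h : ∀ (m : ℕ) (σ : Fin m → ℝ) (x' x'' : Fin m → X),
      strongNorm p σ (T ∘ x') (T ∘ x'') ≤ C * mixedNorm x₀ s p σ x' x'')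
    {m : ℕ} (σ : Fin m → ℝ) (x' x'' : Fin m → X)
    (hne : ∀ j, σ j * dist (T (x' j)) (T (x'' j)) ≠ 0) :
    strongNorm s σ (T ∘ x') (T ∘ x'') ≤ C * weakNorm x₀ s σ x' x'' := by
  set g : Fin m → ℝ := fun j => σ j * dist (T (x' j)) (T (x'' j))
  set N := strongNorm s σ (T ∘ x') (T ∘ x'')
  obtain ⟨t, ht, hpt_eq, hrt_eq⟩ := exists_exponent_conjIdx hp hps hs
  set τ : Fin m → ℝ := fun j => ‖g j‖ ^ t
  have hτ0 : ∀ j, 0 ≤ τ j := fun j => Real.rpow_nonneg (norm_nonneg _) t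
  have hτ : ∀ j, τ j ≠ 0 := fun j => (Real.rpow_pos_of_pos (norm_pos_iff.2 (hne j)) t).ne'
  have hτnorm : eLpNorm τ (conjIdx p s) Measure.count = N ^ t := by
    rw [eLpNorm_norm_rpow g ht, hrt_eq]
    rfl
  have hστ : strongNorm p (fun j => σ j * τ j) (T ∘ x') (T ∘ x'') = N ^ (t + 1) := by
    have hg : eLpNorm (fun j => ‖g j‖ ^ (t + 1)) p Measure.count = N ^ (t + 1) := by
      rw [eLpNorm_norm_rpow g (by positivity), hpt_eq]
      rfl
    rw [← hg]
    refine eLpNorm_congr_norm_ae (.of_forall fun j => ?_)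
    calc ‖σ j * τ j * dist (T (x' j)) (T (x'' j))‖ = ‖g j * τ j‖ := by rw [mul_right_comm]
      _ = ‖g j‖ ^ t * ‖g j‖ := by rw [norm_mul, Real.norm_of_nonneg (hτ0 j), mul_comm]
      _ = ‖‖g j‖ ^ (t + 1)‖ := by
          rw [← Real.rpow_add_one (norm_ne_zero_iff.2 (hne j)),
            Real.norm_of_nonneg (Real.rpow_nonneg (norm_nonneg _) _)]
  have hN : N ^ (t + 1) ≤ C * (N ^ t * weakNorm x₀ s σ x' x'') :=
    calc N ^ (t + 1) = strongNorm p (fun j => σ j * τ j) (T ∘ x') (T ∘ x'') := hστ.symm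
      _ ≤ C * mixedNorm x₀ s p (fun j => σ j * τ j) x' x'' := h _ _ _ _
      _ ≤ C * (N ^ t * weakNorm x₀ s σ x' x'') := by
        gcongr
        exact hτnorm ▸ mixedNorm_mul_le x₀ s p σ hτ x' x''
  rcases eq_or_ne N 0 with hN0 | hN0
  · simp [hN0]
  have hNtop : N ≠ ∞ := (eLpNorm_count_lt_top_of_lt fun _ => enorm_lt_top).ne
  rw [ENNReal.rpow_add _ _ hN0 hNtop, ENNReal.rpow_one, mul_left_comm] at hN
  exact (ENNReal.mul_le_mul_iff_right (ENNReal.rpow_pos (pos_iff_ne_zero.2 hN0) hNtop).ne'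
    (ENNReal.rpow_ne_top_of_nonneg ht.le hNtop)).1 hN

theorem strongNorm_le_mul_mixedNorm_self (hp : p ≠ 0) (hps : p ≤ s)
    (h : ∀ (m : ℕ) (σ : Fin m → ℝ) (x' x'' : Fin m → X),
      strongNorm p σ (T ∘ x') (T ∘ x'') ≤ C * mixedNorm x₀ s p σ x' x'')
    (m : ℕ) (σ : Fin m → ℝ) (x' x'' : Fin m → X) :
    strongNorm s σ (T ∘ x') (T ∘ x'') ≤ C * mixedNorm x₀ s s σ x' x'' := by
  rcases hps.eq_or_lt with rfl | hps
  · exact h m σ x' x''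
  refine le_trans ?_ (mul_le_mul_right (weakNorm_le_mixedNorm_self x₀ s σ x' x'') C)
  rcases eq_or_ne s ∞ with rfl | hs
  · exact strongNorm_top_le_mul_weakNorm x₀ T hp h σ x' x''
  · exact strongNorm_le_mul_weakNorm_of_forall_ne_zero x₀ T
      (fun _ => strongNorm_le_mul_weakNorm_of_lt_of_ne_zero x₀ T hp hps hs h) σ x' x''

end Summing

theorem stmt5_general {X Y : Type*} [MetricSpace X] [MetricSpace Y] (x₀ : X)
    (p s : ℝ≥0∞) (hp : 0 < p) (hps : p ≤ s)
    (T : X → Y)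
    (hsum : LipPMixed x₀ p s p T) :
    LipPMixed x₀ s s s T ∧ lipPMixedNorm x₀ s s s T ≤ lipPMixedNorm x₀ p s p T := by
  obtain ⟨C, hC⟩ := hsum
  exact ⟨⟨C, strongNorm_le_mul_mixedNorm_self x₀ T hp.ne' hps hC⟩,
    sInf_le_sInf fun D hD => strongNorm_le_mul_mixedNorm_self x₀ T hp.ne' hps hD⟩

/-- for `0 < p ≤ s ≤ ∞`, every Lipschitz `(p,m^L(s;p))`-summing map is
Lipschitz `(s,m^L(s;s))`-summing, with
`π^L_{(s,m^L(s;s))}(T) ≤ π^L_{(p,m^L(s;p))}(T)`. -/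
theorem stmt5 {X Y : Type*} [MetricSpace X] [MetricSpace Y] (x₀ : X)
    (p s : ℝ≥0∞) (hp : 0 < p) (hps : p ≤ s)
    (T : X → Y) (K : ℝ≥0) (hT : LipschitzWith K T)
    (hsum : LipPMixed x₀ p s p T) :
    LipPMixed x₀ s s s T ∧ lipPMixedNorm x₀ s s s T ≤ lipPMixedNorm x₀ p s p T :=
  stmt5_general x₀ p s hp hps T hsum
end
end
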